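/- Let k ≥ 1. If m is a positive integer with m ≡ (4^{k+2}−1)/3 + 4^{k+1} (mod 4^{k+2}), then m ≡ 5 (mod 8) and S(m) < S²(m) < m. -/
import Mathlib


/-- The Syracuse function: the odd part of 3m+1. -/
def syr (m : ℕ) : ℕ := (3 * m + 1) / 2 ^ ((3 * m + 1).factorization 2)

lemma syr_of_eq (m a n : ℕ) (hn : n % 2 = 1) (hmn : 3 * m + 1 = 2 ^ a * n) :
    syr m = n := by
  have hn0 : n ≠ 0 := by omega
  have hfac : (2 ^ a * n).factorization 2 = a := by
    rw [Nat.factorization_mul (by positivity) hn0]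
    simp [Nat.Prime.factorization_pow, Nat.prime_two,
      Nat.factorization_eq_zero_of_not_dvd (by omega : ¬ 2 ∣ n)]
  rw [syr, hmn, hfac, Nat.mul_div_cancel_left _ (by positivity)]

theorem stmt12 (k m : ℕ) (hk : 1 ≤ k) (hpos : 0 < m)
    (h : m % 4 ^ (k + 2) = ((4 ^ (k + 2) - 1) / 3 + 4 ^ (k + 1)) % 4 ^ (k + 2)) :
    m % 8 = 5 ∧ syr m < syr (syr m) ∧ syr (syr m) < m := by
  obtain ⟨j, rfl⟩ : ∃ j, k = j + 1 := ⟨k - 1, by omega⟩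
  set P := 4 ^ j with hP
  have hP1 : 1 ≤ P := Nat.one_le_pow _ _ (by norm_num)
  have hP3 : P % 3 = 1 := by
    rw [hP, Nat.pow_mod]; norm_num
  have h2 : (4 : ℕ) ^ (j + 1 + 2) = 64 * P := by ring
  have h1 : (4 : ℕ) ^ (j + 1 + 1) = 16 * P := by ring
  set e := (4 ^ (j + 1 + 2) - 1) / 3 with he'
  have hdvd : (3 : ℕ) ∣ 4 ^ (j + 1 + 2) - 1 := by
    have := Nat.sub_dvd_pow_sub_pow 4 1 (j + 1 + 2)
    simpa using this
  have he : 3 * e + 1 = 64 * P := by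
    rw [he', Nat.mul_div_cancel' hdvd, h2]
    omega
  have hrlt : e + 4 ^ (j + 1 + 1) < 4 ^ (j + 1 + 2) := by
    rw [h1, h2]; omega
  have hmod : m % 4 ^ (j + 1 + 2) = e + 4 ^ (j + 1 + 1) := by
    rw [h, Nat.mod_eq_of_lt hrlt]
  set t := m / 4 ^ (j + 1 + 2) with ht
  have hm : m = 64 * (P * t) + e + 16 * P := by
    have h0 := Nat.div_add_mod m (4 ^ (j + 1 + 2))
    rw [hmod, ← ht, h1, h2, mul_assoc] at h0
    omega
  have hQt : t ≤ P * t := Nat.le_mul_of_pos_left t hP1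
  have hmod8 : m % 8 = 5 := by omega
  have hstep1 : syr m = 12 * t + 7 := by
    apply syr_of_eq m (2 * j + 4)
    · omega
    · have hpow : (2 : ℕ) ^ (2 * j + 4) = 16 * P := by
        rw [hP, show (4 : ℕ) = 2 ^ 2 by norm_num, ← pow_mul]
        ring
      rw [hpow]
      have : 16 * P * (12 * t + 7) = 192 * (P * t) + 112 * P := by ring
      omega
  have hstep2 : syr (12 * t + 7) = 18 * t + 11 := by
    apply syr_of_eq _ 1
    · omega
    · ring
  rw [hstep1, hstep2]
  refine ⟨hmod8, by omega, by omega⟩
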